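/- Let D be a fusion category of rank 3 with Irr(D) = {1, α, β} and fusion rules α⊗α = 1⊕β, β⊗β = 1⊕α⊕β, α⊗β = β⊗α = α⊕β. Then every faithful G-extension C = ⊕_{g∈G} C_g of D is a slightly trivial extension of D, i.e., every component C_g contains an invertible simple object. -/

import Mathlib

open scoped BigOperators
open Real

/-- A fusion ring: the Grothendieck-ring data of a fusion category, with basis `I`
(the isomorphism classes of simple objects), fusion multiplicities `N`, unit,
duality, and Frobenius–Perron dimensions `d`. -/
structure FusionRing (I : Type) [Fintype I] [DecidableEq I] where
  N : I → I → I → ℕ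
  one : I
  dual : I → I
  d : I → ℝ
  d_one : d one = 1
  one_le_d : ∀ i, 1 ≤ d i
  dual_dual : ∀ i, dual (dual i) = i
  d_dual : ∀ i, d (dual i) = d i
  d_mul : ∀ i j, d i * d j = ∑ k, (N i j k : ℝ) * d k
  N_one_left : ∀ i k, N one i k = if k = i then 1 else 0
  N_one_right : ∀ i k, N i one k = if k = i then 1 else 0
  N_unit : ∀ i j, N i j one = if j = dual i then 1 else 0
  assoc : ∀ i j k l, ∑ m, N i j m * N m k l = ∑ m, N j k m * N i m l

/-- A faithfully `G`-graded fusion ring: the Grothendieck data of a faithful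
`G`-extension `C = ⊕_{g ∈ G} C_g` of the fusion category `D = C_e`. -/
structure GradedFusionRing (G : Type) [Group G] [Fintype G] [DecidableEq G]
    (I : Type) [Fintype I] [DecidableEq I] extends FusionRing I where
  deg : I → G
  deg_one : deg one = 1
  deg_mul : ∀ i j k, N i j k ≠ 0 → deg k = deg i * deg j
  faithful : Function.Surjective deg

/-!
Write `x = d α` and `y = d β`. The fusion rules give `x² = 1 + y` and `x y = x + y`, so `x` is a
root of the irreducible cubic `X³ - X² - 2X + 1` and `1, x, y` are linearly independent
over `ℚ`.

For a simple `X` of degree `g`, `X ⊗ X*` lies in `C_1`, so `d X² = 1 + m_X x + n_X y` with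
`m_X, n_X ∈ ℕ`. Summing over `C_g`, whose dimension equals `dim C_1 = 3 + x + 2y`, and comparing
coefficients, `C_g` has three simples with `∑ m_X = 1` and `∑ n_X = 2`. If none of them is
invertible, then `m_X + n_X ≥ 1` for each, so `C_g = {X₁, Y, Y'}` with `d X₁² = 1 + x` and
`d Y = d Y' = x`. Decomposing `α ⊗ X₁ = X₁ ⊕ (K simples of dimension x)` gives
`(x - 1) d X₁ = K x`; squaring yields `x = K² x²`, contradicting the independence of
`1, x, x²`.
-/

open Finset

namespace Finset

lemma exists_eq_one_of_sum_eq_one {ι : Type*} [DecidableEq ι] {s : Finset ι} {m : ι → ℕ}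
    (h : ∑ i ∈ s, m i = 1) : ∃ i ∈ s, m i = 1 ∧ ∀ j ∈ s, j ≠ i → m j = 0 := by
  obtain ⟨i, hi, hmi⟩ := exists_ne_zero_of_sum_ne_zero (h ▸ one_ne_zero)
  have hsplit := add_sum_erase s m hi
  refine ⟨i, hi, by omega, fun j hj hji => ?_⟩
  exact sum_eq_zero_iff.1 (by omega) j (mem_erase.2 ⟨hji, hj⟩)

end Finset

namespace FusionRing

variable {I : Type} [Fintype I] [DecidableEq I] (R : FusionRing I)

lemma dual_involutive : Function.Involutive R.dual := R.dual_dual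

lemma d_pos (i : I) : 0 < R.d i := one_pos.trans_le (R.one_le_d i)

lemma N_dual_rotate (i j k : I) : R.N i j (R.dual k) = R.N j k (R.dual i) := by
  have h := R.assoc i j k R.one
  simp only [R.N_unit, mul_ite, mul_one, mul_zero, eq_comm (a := k),
    R.dual_involutive.eq_iff, Finset.sum_ite_eq', Finset.mem_univ, if_true] at h
  exact h

lemma N_dual_swap (i j k : I) : R.N i j k = R.N (R.dual k) i (R.dual j) := by
  simpa [R.dual_dual] using (R.N_dual_rotate i j (R.dual k)).trans (R.N_dual_rotate j (R.dual k) i)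

lemma N_diag_eq_of_dual_eq (a X : I) (ha : R.dual a = a) : R.N a X X = R.N X (R.dual X) a := by
  simpa [R.dual_dual, ha] using R.N_dual_rotate a X (R.dual X)

lemma sum_N_mul_d (i k : I) : ∑ j, (R.N i j k : ℝ) * R.d j = R.d i * R.d k := by
  calc ∑ j, (R.N i j k : ℝ) * R.d j
      = ∑ j, (R.N (R.dual k) i (R.dual j) : ℝ) * R.d (R.dual j) := by
        simp only [← R.N_dual_swap, R.d_dual]
    _ = ∑ j, (R.N (R.dual k) i j : ℝ) * R.d j :=
        Equiv.sum_comp (R.dual_involutive.toPerm _) (fun j => (R.N (R.dual k) i j : ℝ) * R.d j)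
    _ = R.d i * R.d k := by rw [← R.d_mul, R.d_dual, mul_comm]

end FusionRing

namespace GradedFusionRing

variable {G I : Type} [Group G] [Fintype G] [DecidableEq G] [Fintype I] [DecidableEq I]
  (R : GradedFusionRing G I)

def component (g : G) : Finset I := univ.filter (R.deg · = g)

@[simp]
lemma mem_component {g : G} {k : I} : k ∈ R.component g ↔ R.deg k = g := by
  simp [component]

lemma deg_dual (i : I) : R.deg (R.dual i) = (R.deg i)⁻¹ := by
  refine eq_inv_of_mul_eq_one_right ?_
  rw [← R.deg_mul i (R.dual i) R.one (by simp [R.N_unit]), R.deg_one]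

lemma N_eq_zero_of_deg_ne {i j k : I} (h : R.deg k ≠ R.deg i * R.deg j) : R.N i j k = 0 :=
  not_imp_comm.mp (R.deg_mul i j k) h

lemma d_mul_eq_sum_component (i j : I) :
    R.d i * R.d j = ∑ k ∈ R.component (R.deg i * R.deg j), (R.N i j k : ℝ) * R.d k := by
  rw [R.d_mul, component, sum_filter]
  refine sum_congr rfl fun k _ => ?_
  split_ifs with h
  · rfl
  · simp [R.N_eq_zero_of_deg_ne h]

lemma sum_component_one_N_mul_d {X k : I} (hk : R.deg k = R.deg X) :
    ∑ j ∈ R.component 1, (R.N X j k : ℝ) * R.d j = R.d X * R.d k := by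
  rw [← R.sum_N_mul_d X k, component, sum_filter]
  refine sum_congr rfl fun j _ => ?_
  split_ifs with h
  · rfl
  · rw [R.N_eq_zero_of_deg_ne (by rwa [hk, ne_eq, left_eq_mul]), Nat.cast_zero, zero_mul]

lemma sum_sq_d_component (g : G) :
    ∑ k ∈ R.component g, R.d k ^ 2 = ∑ k ∈ R.component 1, R.d k ^ 2 := by
  obtain ⟨X, rfl⟩ := R.faithful g
  refine mul_left_cancel₀ (R.d_pos X).ne' ?_
  calc R.d X * ∑ k ∈ R.component (R.deg X), R.d k ^ 2
      = ∑ k ∈ R.component (R.deg X),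
          (∑ j ∈ R.component 1, (R.N X j k : ℝ) * R.d j) * R.d k := by
        rw [mul_sum]
        refine sum_congr rfl fun k hk => ?_
        rw [R.sum_component_one_N_mul_d ((R.mem_component).1 hk)]
        ring
    _ = ∑ j ∈ R.component 1,
          R.d j * ∑ k ∈ R.component (R.deg X), (R.N X j k : ℝ) * R.d k := by
        simp only [sum_mul, mul_sum]
        rw [sum_comm]
        exact sum_congr rfl fun _ _ => sum_congr rfl fun _ _ => by ring
    _ = ∑ j ∈ R.component 1, R.d j * (R.d X * R.d j) := by
        refine sum_congr rfl fun j hj => ?_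
        rw [R.d_mul_eq_sum_component, (R.mem_component).1 hj, mul_one]
    _ = R.d X * ∑ k ∈ R.component 1, R.d k ^ 2 := by
        rw [mul_sum]
        exact sum_congr rfl fun _ _ => by ring

lemma d_mul_eq_of_d_eq_on_component {a X : I} {c : ℝ} (ha : R.deg a = 1)
    (hc : ∀ Y ∈ R.component (R.deg X), Y ≠ X → R.d Y = c) :
    R.d a * R.d X =
      R.N a X X * R.d X + (∑ k ∈ (R.component (R.deg X)).erase X, R.N a X k : ℕ) * c := by
  rw [R.d_mul_eq_sum_component, ha, one_mul,
    ← add_sum_erase _ _ ((R.mem_component).2 rfl), Nat.cast_sum, sum_mul]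
  congr 1
  refine sum_congr rfl fun k hk => ?_
  rw [hc k (mem_of_mem_erase hk) (ne_of_mem_erase hk)]

end GradedFusionRing

open Polynomial in
lemma irreducible_X_pow_three_sub_X_sq_sub_two_mul_X_add_one :
    Irreducible (X ^ 3 - X ^ 2 - 2 * X + 1 : ℚ[X]) := by
  set f : ℤ[X] := X ^ 3 - X ^ 2 - 2 * X + 1
  have hmonic : f.Monic := by simp only [f]; monicity!
  have hdeg : (f.map (Int.castRingHom (ZMod 2))).natDegree = 3 := by
    rw [hmonic.natDegree_map]
    simp only [f]
    compute_degree!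
  have hmod2 : Irreducible (f.map (Int.castRingHom (ZMod 2))) := by
    have hm := hmonic.map (Int.castRingHom (ZMod 2))
    rw [hm.irreducible_iff_roots_eq_zero_of_degree_le_three (by omega) hdeg.le]
    refine Multiset.eq_zero_of_forall_notMem fun a ha => ?_
    have hno : ∀ a : ZMod 2, a ^ 3 - a ^ 2 - 2 * a + 1 ≠ 0 := by decide
    rw [mem_roots hm.ne_zero] at ha
    exact hno a (by simpa [f] using ha)
  have hZ := hmonic.irreducible_of_irreducible_map _ _ hmod2
  simpa [f] using (hmonic.irreducible_iff_irreducible_map_fraction_map (K := ℚ)).1 hZ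

section CubicRoot

variable {x : ℝ}

lemma cubic_eq_zero_of_sq_eq_of_mul_eq {y : ℝ} (hx2 : x ^ 2 = 1 + y) (hxy : x * y = x + y) :
    x ^ 3 - x ^ 2 - 2 * x + 1 = 0 := by
  linear_combination x * hx2 + hxy - hx2

open Polynomial in
lemma eq_zero_of_add_mul_add_mul_sq_eq_zero (hx : x ^ 3 - x ^ 2 - 2 * x + 1 = 0) {a b c : ℚ}
    (h : a + b * x + c * x ^ 2 = 0) : a = 0 ∧ b = 0 ∧ c = 0 := by
  set q : ℚ[X] := C a + C b * X + C c * X ^ 2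
  have hdvd : (X ^ 3 - X ^ 2 - 2 * X + 1 : ℚ[X]) ∣ q :=
    (irreducible_X_pow_three_sub_X_sq_sub_two_mul_X_add_one.dvd_iff_aeval_eq_zero (b := x)
      (by simpa [map_ofNat] using hx)).1 (by simpa [q] using h)
  have hq : q = 0 := by
    by_contra hq
    have hle := natDegree_le_of_dvd hdvd hq
    have hq2 : q.natDegree ≤ 2 := by simp only [q]; compute_degree
    have h3 : (X ^ 3 - X ^ 2 - 2 * X + 1 : ℚ[X]).natDegree = 3 := by compute_degree!
    omega
  have hcoeff (n : ℕ) : q.coeff n = 0 := by rw [hq, coeff_zero]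
  exact ⟨by simpa [q] using hcoeff 0, by simpa [q, coeff_X] using hcoeff 1,
    by simpa [q, coeff_X] using hcoeff 2⟩

lemma nat_coeffs_eq_of_sq_eq (hx : x ^ 3 - x ^ 2 - 2 * x + 1 = 0) {y : ℝ} (hx2 : x ^ 2 = 1 + y)
    {a b c : ℕ} (h : a + b * x + c * y = 3 + x + 2 * y) : a = 3 ∧ b = 1 ∧ c = 2 := by
  obtain ⟨ha, hb, hc⟩ := eq_zero_of_add_mul_add_mul_sq_eq_zero hx
    (a := a - c - 1) (b := b - 1) (c := c - 2)
    (by push_cast; linear_combination h + (c - 2 : ℝ) * hx2)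
  refine ⟨?_, ?_, ?_⟩ <;> (qify; linarith)

lemma mul_ne_add_nat_mul (hx : x ^ 3 - x ^ 2 - 2 * x + 1 = 0) {d : ℝ} (hd : d ^ 2 = 1 + x)
    (K : ℕ) : x * d ≠ d + K * x := by
  intro h
  -- square `(x - 1) d = K x` and use `(x - 1)² (x + 1) = x`
  have hrel : x - K ^ 2 * x ^ 2 = 0 := by
    linear_combination (-1 : ℝ) * hx - (x - 1) ^ 2 * hd + ((x - 1) * d + K * x) * h
  have := eq_zero_of_add_mul_add_mul_sq_eq_zero hx (a := 0) (b := 1) (c := -K ^ 2)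
    (by push_cast; linear_combination hrel)
  norm_num at this

end CubicRoot

namespace GradedFusionRing

variable {G I : Type} [Group G] [Fintype G] [DecidableEq G] [Fintype I] [DecidableEq I]
  (R : GradedFusionRing G I) {α β : I}

lemma component_one_eq (hα : R.deg α = 1) (hβ : R.deg β = 1)
    (hrank : ∀ i : I, R.deg i = 1 → i = R.one ∨ i = α ∨ i = β) :
    R.component 1 = {R.one, α, β} := by
  ext k
  simp only [mem_component, mem_insert, mem_singleton]
  refine ⟨hrank k, ?_⟩
  rintro (rfl | rfl | rfl)
  exacts [R.deg_one, hα, hβ]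

lemma d_sq_eq_of_component_one_eq (hC1 : R.component 1 = {R.one, α, β})
    (hne1 : α ≠ R.one) (hne2 : β ≠ R.one) (hne3 : α ≠ β) (X : I) :
    R.d X ^ 2 = 1 + R.N X (R.dual X) α * R.d α + R.N X (R.dual X) β * R.d β := by
  rw [sq]
  nth_rw 2 [← R.d_dual X]
  rw [R.d_mul_eq_sum_component, R.deg_dual, mul_inv_cancel, hC1,
    sum_insert (by simp [hne1.symm, hne2.symm]), sum_insert (by simpa using hne3),
    sum_singleton, R.N_unit, if_pos rfl, R.d_one]
  ring

lemma card_add_sum_mul_add_sum_mul (hC1 : R.component 1 = {R.one, α, β})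
    (hne1 : α ≠ R.one) (hne2 : β ≠ R.one) (hne3 : α ≠ β)
    (hx2 : R.d α ^ 2 = 1 + R.d β) (hxy : R.d α * R.d β = R.d α + R.d β) (g : G) :
    ((R.component g).card : ℝ) + (∑ X ∈ R.component g, R.N X (R.dual X) α : ℕ) * R.d α
      + (∑ X ∈ R.component g, R.N X (R.dual X) β : ℕ) * R.d β
      = 3 + R.d α + 2 * R.d β := by
  have h := R.sum_sq_d_component g
  rw [hC1, sum_insert (by simp [hne1.symm, hne2.symm]), sum_insert (by simpa using hne3),
    sum_singleton, R.d_one,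
    sum_congr rfl fun X _ => R.d_sq_eq_of_component_one_eq hC1 hne1 hne2 hne3 X,
    sum_add_distrib, sum_add_distrib, sum_const, ← sum_mul, ← sum_mul] at h
  push_cast
  linear_combination h + (2 - R.d β) * hx2 + (R.d α + 1) * hxy

lemma exists_of_forall_d_ne_one (hC1 : R.component 1 = {R.one, α, β})
    (hne1 : α ≠ R.one) (hne2 : β ≠ R.one) (hne3 : α ≠ β)
    (hx2 : R.d α ^ 2 = 1 + R.d β) (hxy : R.d α * R.d β = R.d α + R.d β) {g : G}
    (hg : ∀ X ∈ R.component g, R.d X ≠ 1) :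
    ∃ X₁ ∈ R.component g, R.N X₁ (R.dual X₁) α = 1 ∧ R.d X₁ ^ 2 = 1 + R.d α ∧
      ∀ Y ∈ R.component g, Y ≠ X₁ → R.d Y = R.d α := by
  set m : I → ℕ := fun X => R.N X (R.dual X) α
  set n : I → ℕ := fun X => R.N X (R.dual X) β
  have hsq : ∀ X, R.d X ^ 2 = 1 + m X * R.d α + n X * R.d β :=
    R.d_sq_eq_of_component_one_eq hC1 hne1 hne2 hne3
  obtain ⟨hcard, hM, hN⟩ :=
    nat_coeffs_eq_of_sq_eq (cubic_eq_zero_of_sq_eq_of_mul_eq hx2 hxy) hx2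
    (R.card_add_sum_mul_add_sum_mul hC1 hne1 hne2 hne3 hx2 hxy g)
  have hpos : ∀ X ∈ R.component g, 1 ≤ m X + n X := by
    intro X hX
    by_contra! h0
    refine hg X hX ((pow_eq_one_iff_of_nonneg (R.d_pos X).le two_ne_zero).1 ?_)
    rw [hsq, show m X = 0 by omega, show n X = 0 by omega]
    simp
  have hmn : ∀ X ∈ R.component g, m X + n X = 1 := by
    refine fun X hX => ((sum_eq_sum_iff_of_le hpos).1 ?_ X hX).symm
    rw [sum_add_distrib, hM, hN, sum_const, hcard, smul_eq_mul, mul_one]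
  obtain ⟨X₁, hX₁, hm₁, hm_ne⟩ := exists_eq_one_of_sum_eq_one (m := m) hM
  refine ⟨X₁, hX₁, hm₁, ?_, fun Y hY hY₁ => ?_⟩
  · rw [hsq, hm₁, show n X₁ = 0 by have := hmn X₁ hX₁; omega]
    simp
  · rw [← pow_left_inj₀ (R.d_pos Y).le (R.d_pos α).le two_ne_zero, hsq, hm_ne Y hY hY₁,
      show n Y = 1 by have := hmn Y hY; have := hm_ne Y hY hY₁; omega, hx2]
    simp

end GradedFusionRing

theorem stmt10_general {G I : Type} [Group G] [Fintype G] [DecidableEq G]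
    [Fintype I] [DecidableEq I] (R : GradedFusionRing G I)
    (α β : I) (hα : R.deg α = 1) (hβ : R.deg β = 1)
    (hne1 : α ≠ R.one) (hne2 : β ≠ R.one) (hne3 : α ≠ β)
    (hrank : ∀ i : I, R.deg i = 1 → i = R.one ∨ i = α ∨ i = β)
    (hαα : ∀ k : I, R.N α α k = (if k = R.one then 1 else 0) + (if k = β then 1 else 0))
    (hαβ : ∀ k : I, R.N α β k = (if k = α then 1 else 0) + (if k = β then 1 else 0)) :
    ∀ g : G, ∃ δ : I, R.deg δ = g ∧ R.d δ = 1 := by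
  have hC1 := R.component_one_eq hα hβ hrank
  have hdα : R.dual α = α := by
    simpa [hαα, hne2.symm, eq_comm] using R.N_unit α α
  have hx2 : R.d α ^ 2 = 1 + R.d β := by
    simp [sq, R.d_mul, hαα, add_mul, sum_add_distrib, R.d_one]
  have hxy : R.d α * R.d β = R.d α + R.d β := by
    simp [R.d_mul, hαβ, add_mul, sum_add_distrib]
  intro g
  by_contra! hcon
  obtain ⟨X₁, hX₁, hm₁, hd₁, hothers⟩ := R.exists_of_forall_d_ne_one hC1 hne1 hne2 hne3
    hx2 hxy (g := g) fun X hX => hcon X ((R.mem_component).1 hX)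
  rw [← (R.mem_component).1 hX₁] at hothers
  have hαX₁ := R.d_mul_eq_of_d_eq_on_component hα hothers
  rw [R.N_diag_eq_of_dual_eq α X₁ hdα, hm₁, Nat.cast_one, one_mul] at hαX₁
  exact mul_ne_add_nat_mul (cubic_eq_zero_of_sq_eq_of_mul_eq hx2 hxy) hd₁ _ hαX₁

/-- if `D` is the rank-3 fusion category with `Irr D = {1, α, β}` and
fusion rules `α² = 1 ⊕ β`, `β² = 1 ⊕ α ⊕ β`, `αβ = βα = α ⊕ β`, then every faithful
`G`-extension `C = ⊕_g C_g` of `D` is slightly trivial: every component contains an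
invertible simple object. -/
theorem stmt10 {G I : Type} [Group G] [Fintype G] [DecidableEq G]
    [Fintype I] [DecidableEq I] (R : GradedFusionRing G I)
    (α β : I) (hα : R.deg α = 1) (hβ : R.deg β = 1)
    (hne1 : α ≠ R.one) (hne2 : β ≠ R.one) (hne3 : α ≠ β)
    (hrank : ∀ i : I, R.deg i = 1 → i = R.one ∨ i = α ∨ i = β)
    (hαα : ∀ k : I, R.N α α k = (if k = R.one then 1 else 0) + (if k = β then 1 else 0))
    (hββ : ∀ k : I, R.N β β k =
      (if k = R.one then 1 else 0) + (if k = α then 1 else 0) + (if k = β then 1 else 0))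
    (hαβ : ∀ k : I, R.N α β k = (if k = α then 1 else 0) + (if k = β then 1 else 0))
    (hβα : ∀ k : I, R.N β α k = (if k = α then 1 else 0) + (if k = β then 1 else 0)) :
    ∀ g : G, ∃ δ : I, R.deg δ = g ∧ R.d δ = 1 :=
  stmt10_general R α β hα hβ hne1 hne2 hne3 hrank hαα hαβ
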